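/- arXiv:2107.11764 — 2 statements merged into one kernel-verified Lean document; each statement's English description precedes it below -/
import Mathlib

section
/- Under the hypotheses of the hierarchical chordality proposition (G chordal, partition into blocks with complete bipartite connections between adjacent blocks), if K̄ = {C̄₁,…,C̄_m} is the set of maximal cliques of the quotient graph G̅ and, for each i, K_i is the set of maximal cliques of the subgraph of G induced by the union of blocks in C̄_i, then the set of maximal cliques of G equals the union of the K_i over i = 1,…,m. -/
/-!
A clique `s` of `G` meets pairwise adjacent blocks, so its blocks form a clique of `Gbar`, contained
in some maximal clique `C`; a maximal clique of `G` lying in the union of the blocks of `C` is a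
maximal clique of the induced subgraph. Conversely, a maximal clique `t` of the subgraph induced
by the blocks of a maximal clique `C` meets every block of `C`: a vertex of a missed block is
adjacent to all of `t` by the complete bipartite connections. Hence any clique of `G` containing
`t` has its blocks in a clique of `Gbar` containing `C`, i.e. in `C` itself, so it lies in the
induced subgraph and equals `t`.
-/

/-- A simple graph is chordal if every (injective) cycle of length at least 4 has a chord. -/
def IsChordal {V : Type*} (G : SimpleGraph V) : Prop :=
  ∀ n : ℕ, 4 ≤ n → ∀ f : ZMod n → V, Function.Injective f →
    (∀ i, G.Adj (f i) (f (i + 1))) →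
    ∃ i j : ZMod n, i ≠ j ∧ j ≠ i + 1 ∧ i ≠ j + 1 ∧ G.Adj (f i) (f j)

/-- A maximal clique: a clique not properly contained in any other clique. -/
def IsMaxClq {V : Type*} (G : SimpleGraph V) (s : Set V) : Prop :=
  G.IsClique s ∧ ∀ t : Set V, G.IsClique t → s ⊆ t → s = t

open Set

theorem isMaxClq_iff_maximal {V : Type*} {G : SimpleGraph V} {s : Set V} :
    IsMaxClq G s ↔ Maximal G.IsClique s := by
  rw [maximal_subset_iff]
  rfl

namespace SimpleGraph

variable {V : Type*} {G : SimpleGraph V}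

theorem exists_maximal_isClique_superset {s : Set V} (hs : G.IsClique s) :
    ∃ t, s ⊆ t ∧ Maximal G.IsClique t :=
  zorn_subset_nonempty {t | G.IsClique t}
    (fun c hc hchain _ => ⟨⋃₀ c, (isClique_sUnion hchain.directedOn).2 hc,
      fun _ => subset_sUnion_of_mem⟩) s hs

theorem IsClique.preimage_val_induce {S u : Set V} (hu : G.IsClique u) :
    (G.induce S).IsClique (Subtype.val ⁻¹' u) := by
  rw [isClique_induce_iff, Subtype.image_preimage_coe]
  exact hu.inter_right S

theorem _root_.Maximal.preimage_val_induce {S s : Set V} (hs : Maximal G.IsClique s)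
    (hsS : s ⊆ S) :
    Maximal (G.induce S).IsClique (Subtype.val ⁻¹' s) := by
  refine ⟨hs.1.preimage_val_induce, fun t ht hst => ?_⟩
  have hsub : s ⊆ Subtype.val '' t := fun v hv => ⟨⟨v, hsS hv⟩, hst hv, rfl⟩
  intro x hx
  exact hs.2 (isClique_induce_iff.1 ht) hsub ⟨x, hx, rfl⟩

theorem _root_.Maximal.image_val_of_induce {S : Set V} {t : Set S}
    (ht : Maximal (G.induce S).IsClique t)
    (hS : ∀ u, G.IsClique u → Subtype.val '' t ⊆ u → u ⊆ S) :
    Maximal G.IsClique (Subtype.val '' t) := by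
  refine ⟨isClique_induce_iff.1 ht.1, fun u hu htu v hv => ?_⟩
  have hu' : (G.induce S).IsClique (Subtype.val ⁻¹' u) := hu.preimage_val_induce
  exact ⟨⟨v, hS u hu htu hv⟩, ht.2 hu' (fun x hx => htu ⟨x, hx, rfl⟩) hv, rfl⟩

variable {B : Type*} {Gbar : SimpleGraph B} {blk : V → B}

theorem IsClique.image_of_adj
    (hadj : ∀ v w, blk v ≠ blk w → G.Adj v w → Gbar.Adj (blk v) (blk w))
    {s : Set V} (hs : G.IsClique s) : Gbar.IsClique (blk '' s) := by
  rintro _ ⟨v, hv, rfl⟩ _ ⟨w, hw, rfl⟩ hne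
  exact hadj v w hne (hs hv hw fun h => hne (congrArg blk h))

theorem subset_image_of_maximal_isClique_induce (hsurj : Function.Surjective blk)
    (hcomp : ∀ v w : V, blk v ≠ blk w → Gbar.Adj (blk v) (blk w) → G.Adj v w)
    {C : Set B} (hC : Gbar.IsClique C) {t : Set {v : V // blk v ∈ C}}
    (ht : Maximal (G.induce {v | blk v ∈ C}).IsClique t) :
    C ⊆ blk '' (Subtype.val '' t) := by
  intro b hb
  by_contra hmiss
  obtain ⟨v, rfl⟩ := hsurj b
  have hblk : ∀ w ∈ t, blk v ≠ blk (w : V) :=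
    fun w hw h => hmiss ⟨w, ⟨w, hw, rfl⟩, h.symm⟩
  have hins : (G.induce {v | blk v ∈ C}).IsClique (insert ⟨v, hb⟩ t) :=
    ht.1.insert fun w hw _ => hcomp v w (hblk w hw) (hC hb w.2 (hblk w hw))
  exact hblk _ (ht.2 hins (subset_insert _ _) (mem_insert _ _)) rfl

end SimpleGraph

theorem stmt1_general {V B : Type*}
    (G : SimpleGraph V) (blk : V → B) (hsurj : Function.Surjective blk)
    (Gbar : SimpleGraph B)
    (hGbar : ∀ b b' : B, Gbar.Adj b b' ↔
      b ≠ b' ∧ ∃ v w : V, blk v = b ∧ blk w = b' ∧ G.Adj v w)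
    (hcomp : ∀ v w : V, blk v ≠ blk w → Gbar.Adj (blk v) (blk w) → G.Adj v w) :
    ∀ s : Set V, IsMaxClq G s ↔
      ∃ C : Set B, IsMaxClq Gbar C ∧
        ∃ t : Set {v : V // blk v ∈ C},
          IsMaxClq (SimpleGraph.induce {v : V | blk v ∈ C} G) t ∧
          s = Subtype.val '' t := by
  have hadj : ∀ v w, blk v ≠ blk w → G.Adj v w → Gbar.Adj (blk v) (blk w) :=
    fun v w hne hvw => (hGbar _ _).2 ⟨hne, v, w, rfl, rfl, hvw⟩
  intro s
  simp only [isMaxClq_iff_maximal]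
  constructor
  · intro hs
    obtain ⟨C, hsC, hC⟩ := SimpleGraph.exists_maximal_isClique_superset (hs.1.image_of_adj hadj)
    have hsS : s ⊆ {v | blk v ∈ C} := image_subset_iff.1 hsC
    refine ⟨C, hC, _, hs.preimage_val_induce hsS, ?_⟩
    exact (image_preimage_eq_of_subset (by simpa using hsS)).symm
  · rintro ⟨C, hC, t, ht, rfl⟩
    refine ht.image_val_of_induce fun u hu htu v hv => ?_
    have hCt := SimpleGraph.subset_image_of_maximal_isClique_induce hsurj hcomp hC.1 ht
    have hCu : C = blk '' u := hC.eq_of_subset (hu.image_of_adj hadj) (hCt.trans (image_mono htu))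
    exact hCu ▸ mem_image_of_mem blk hv

/-- under the hypotheses of the hierarchical chordality proposition (G chordal,
partition into blocks with complete bipartite connections between adjacent blocks), the
maximal cliques of `G` are exactly the maximal cliques of the subgraphs of `G` induced by
the unions of blocks of the maximal cliques of the quotient graph `Gbar`. -/
theorem stmt1 {V B : Type*} [Fintype V] [Fintype B]
    (G : SimpleGraph V) (blk : V → B) (hsurj : Function.Surjective blk)
    (Gbar : SimpleGraph B)
    (hGbar : ∀ b b' : B, Gbar.Adj b b' ↔
      b ≠ b' ∧ ∃ v w : V, blk v = b ∧ blk w = b' ∧ G.Adj v w)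
    (hcomp : ∀ v w : V, blk v ≠ blk w → Gbar.Adj (blk v) (blk w) → G.Adj v w)
    (hchordal : IsChordal G) :
    ∀ s : Set V, IsMaxClq G s ↔
      ∃ C : Set B, IsMaxClq Gbar C ∧
        ∃ t : Set {v : V // blk v ∈ C},
          IsMaxClq (SimpleGraph.induce {v : V | blk v ∈ C} G) t ∧
          s = Subtype.val '' t :=
  stmt1_general G blk hsurj Gbar hGbar hcomp
end

section
/- Let G(V,E) be a chordal graph with maximal cliques C₁,…,C_m, and let Z' be a symmetric partially specified real matrix whose entries are specified exactly on positions (i,j) with i=j or (i,j) ∈ E. Then Z' admits a completion Z that is positive semidefinite with rank(Z) ≤ 1 if and only if, for every i ∈ {1,…,m}, the fully specified principal submatrix of Z' indexed by C_i is positive semidefinite and has rank at most 1. -/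
theorem Matrix.mul_apply_eq_of_rank_le_one {m n K : Type*} [Fintype n] [Field K]
    {M : Matrix m n K} (hM : M.rank ≤ 1) (i k : m) (j l : n) :
    M i j * M k l = M i l * M k j := by
  classical
  obtain ⟨v, hv⟩ := finrank_le_one_iff.mp hM
  have hcol (j : n) : ∃ c : K, ∀ i, M i j = c * (v : m → K) i := by
    obtain ⟨c, hc⟩ := hv ⟨M.mulVecLin (Pi.single j 1), LinearMap.mem_range_self _ _⟩
    refine ⟨c, fun i => ?_⟩
    simpa [Matrix.mulVec_single] using (congrFun (congrArg Subtype.val hc) i).symm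
  obtain ⟨a, ha⟩ := hcol j
  obtain ⟨b, hb⟩ := hcol l
  rw [ha, ha, hb, hb]
  ring

theorem Int.exists_unit_mul_eq_of_mul_self_eq {R : Type*} [CommRing R] [NoZeroDivisors R]
    {a b : R} (h : a * a = b * b) : ∃ e : ℤˣ, a = ((e : ℤ) : R) * b := by
  rcases mul_self_eq_mul_self_iff.mp h with rfl | rfl
  · exact ⟨1, by simp⟩
  · exact ⟨-1, by simp⟩

theorem Int.unit_eq_of_cast_mul_eq {R : Type*} [CommRing R] [NoZeroDivisors R] [CharZero R]
    {e₁ e₂ : ℤˣ} {c : R} (hc : c ≠ 0) (h : ((e₁ : ℤ) : R) * c = ((e₂ : ℤ) : R) * c) :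
    e₁ = e₂ :=
  Units.ext (Int.cast_injective (mul_right_cancel₀ hc h))

namespace SimpleGraph

variable {V α : Type*} [CommGroup α]

structure IsCocycle (G : SimpleGraph V) (σ : V → V → α) : Prop where
  inv : ∀ u v, G.Adj u v → σ v u = (σ u v)⁻¹
  mul : ∀ u v w, G.Adj u v → G.Adj v w → G.Adj u w → σ u v * σ v w = σ u w

namespace Walk

variable {G : SimpleGraph V} (σ : V → V → α)

def edgeProd : {u v : V} → G.Walk u v → α
  | _, _, nil => 1
  | u, _, cons (v := w) _ p => σ u w * p.edgeProd

@[simp]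
lemma edgeProd_nil {u : V} : (nil : G.Walk u u).edgeProd σ = 1 := rfl

@[simp]
lemma edgeProd_cons {u v w : V} (h : G.Adj u v) (p : G.Walk v w) :
    (cons h p).edgeProd σ = σ u v * p.edgeProd σ := rfl

@[simp]
lemma edgeProd_copy {u v u' v' : V} (p : G.Walk u v) (hu : u = u') (hv : v = v') :
    (p.copy hu hv).edgeProd σ = p.edgeProd σ := by
  subst hu hv; rfl

@[simp]
lemma edgeProd_append {u v w : V} (p : G.Walk u v) (q : G.Walk v w) :
    (p.append q).edgeProd σ = p.edgeProd σ * q.edgeProd σ := by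
  induction p with
  | nil => simp
  | cons h p ih => simp [ih, mul_assoc]

@[simp]
lemma edgeProd_concat {u v w : V} (p : G.Walk u v) (h : G.Adj v w) :
    (p.concat h).edgeProd σ = p.edgeProd σ * σ v w := by
  simp [concat_eq_append]

lemma edgeProd_reverse (hinv : ∀ u v, G.Adj u v → σ v u = (σ u v)⁻¹) {u v : V}
    (p : G.Walk u v) : p.reverse.edgeProd σ = (p.edgeProd σ)⁻¹ := by
  induction p with
  | nil => simp
  | cons h p ih => simp [ih, hinv _ _ h, mul_comm]

lemma edgeProd_take_mul_edgeProd_drop {u v : V} (p : G.Walk u v) (n : ℕ) :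
    (p.take n).edgeProd σ * (p.drop n).edgeProd σ = p.edgeProd σ := by
  induction p generalizing n with
  | nil => cases n <;> simp [take, drop]
  | cons h p ih => cases n <;> simp [take, drop, ih, mul_assoc]

lemma edgeProd_eq_mul_mul {u v : V} (p : G.Walk u v) (a c : ℕ) :
    p.edgeProd σ = (p.take a).edgeProd σ * ((p.drop a).take c).edgeProd σ *
      (p.drop (a + c)).edgeProd σ := by
  rw [← p.edgeProd_take_mul_edgeProd_drop σ a,
    ← (p.drop a).edgeProd_take_mul_edgeProd_drop σ c, drop_drop, edgeProd_copy, mul_assoc]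

variable {σ}

lemma edgeProd_eq_one_of_length_lt_four (hσ : G.IsCocycle σ) {u : V} (p : G.Walk u u)
    (hp : p.length < 4) : p.edgeProd σ = 1 := by
  rcases p with _ | ⟨h₁, _ | ⟨h₂, _ | ⟨h₃, _ | ⟨_, _⟩⟩⟩⟩
  · rfl
  · exact (G.irrefl h₁).elim
  · simp [hσ.inv _ _ h₁]
  · simp [← mul_assoc, hσ.mul _ _ _ h₁ h₂ h₃.symm, hσ.inv _ _ h₃.symm]
  · simp only [length_cons] at hp; omega

lemma edgeProd_eq_one_of_getVert_eq {u : V} {p : G.Walk u u}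
    (ih : ∀ {w} (q : G.Walk w w), q.length < p.length → q.edgeProd σ = 1)
    {a c : ℕ} (hc : 0 < c) (hac : a + c < p.length) (heq : p.getVert (a + c) = p.getVert a) :
    p.edgeProd σ = 1 := by
  have h₁ := ih ((p.take a).append ((p.drop (a + c)).copy heq rfl)) (by simp; omega)
  have h₂ := ih (((p.drop a).take c).copy rfl (by rw [drop_getVert, heq])) (by simp; omega)
  simp only [edgeProd_append, edgeProd_copy] at h₁ h₂
  rw [edgeProd_eq_mul_mul σ p a c, mul_right_comm, h₁, h₂, one_mul]

lemma edgeProd_eq_one_of_adj (hinv : ∀ u v, G.Adj u v → σ v u = (σ u v)⁻¹) {u : V}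
    {p : G.Walk u u} (ih : ∀ {w} (q : G.Walk w w), q.length < p.length → q.edgeProd σ = 1)
    {a c : ℕ} (hc : 2 ≤ c) (hac : a + c < p.length) (hc' : c + 1 < p.length)
    (hadj : G.Adj (p.getVert a) (p.getVert (a + c))) : p.edgeProd σ = 1 := by
  have hadj' : G.Adj ((p.drop a).getVert c) (p.getVert a) := by
    rw [drop_getVert]; exact hadj.symm
  have h₁ := ih ((p.take a).append (cons hadj (p.drop (a + c)))) (by simp; omega)
  have h₂ := ih (((p.drop a).take c).concat hadj') (by simp; omega)
  simp only [edgeProd_append, edgeProd_cons, edgeProd_concat, drop_getVert,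
    hinv _ _ hadj] at h₁ h₂
  rw [edgeProd_eq_mul_mul σ p a c, mul_inv_eq_one.mp h₂, mul_assoc, h₁]

end Walk

end SimpleGraph

namespace IsChordal

open SimpleGraph SimpleGraph.Walk

variable {V : Type*} {G : SimpleGraph V}

theorem comap {W : Type*} (hG : IsChordal G) (f : W ↪ V) : IsChordal (G.comap f) :=
  fun n hn c hc hadj => hG n hn (f ∘ c) (f.injective.comp hc) hadj

/-- The chord joins `g a` and `g (a + c)`; `2 ≤ c` and `c + 1 < n` say that it is neither an edge
of the cycle nor its closing edge. -/
theorem exists_chord (hG : IsChordal G) {n : ℕ} (hn : 4 ≤ n) {g : ℕ → V}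
    (hinj : Set.InjOn g (Set.Iio n)) (hadj : ∀ k < n, G.Adj (g k) (g (k + 1)))
    (hclosed : g n = g 0) :
    ∃ a c, 2 ≤ c ∧ a + c < n ∧ c + 1 < n ∧ G.Adj (g a) (g (a + c)) := by
  have : NeZero n := ⟨by omega⟩
  have : Fact (1 < n) := ⟨by omega⟩
  have hval (k : ZMod n) : (k + 1).val = (k.val + 1) % n := by rw [ZMod.val_add, ZMod.val_one]
  have hcyc (k : ZMod n) : G.Adj (g k.val) (g (k + 1).val) := by
    have h := hadj _ (ZMod.val_lt k)
    rw [hval]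
    rcases Nat.lt_or_ge (k.val + 1) n with hk | hk
    · rwa [Nat.mod_eq_of_lt hk]
    · have hk' : k.val + 1 = n := le_antisymm (ZMod.val_lt k) hk
      rw [hk', Nat.mod_self]
      rwa [hk', hclosed] at h
  obtain ⟨i, j, hij, hji, hij', hadj'⟩ := hG n hn (fun k => g k.val)
    (fun i j h => ZMod.val_injective n (hinj (ZMod.val_lt i) (ZMod.val_lt j) h)) hcyc
  wlog hlt : i.val < j.val generalizing i j
  · exact this j i hij.symm hij' hji hadj'.symm
      (lt_of_le_of_ne (not_lt.mp hlt) fun h => hij (ZMod.val_injective n h.symm))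
  have hj := ZMod.val_lt j
  refine ⟨i.val, j.val - i.val, ?_, by omega, ?_, by rwa [Nat.add_sub_cancel' hlt.le]⟩
  · by_contra h
    exact hji (ZMod.val_injective n (by rw [hval, Nat.mod_eq_of_lt (by omega)]; omega))
  · by_contra h
    refine hij' (ZMod.val_injective n ?_)
    rw [hval, show j.val + 1 = n by omega, Nat.mod_self]
    omega

variable {α : Type*} [CommGroup α] {σ : V → V → α}

theorem edgeProd_eq_one (hG : IsChordal G) (hσ : G.IsCocycle σ) {u : V} (p : G.Walk u u) :
    p.edgeProd σ = 1 := by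
  induction hn : p.length using Nat.strong_induction_on generalizing u with
  | _ n ih =>
  have ih' {w : V} (q : G.Walk w w) (hq : q.length < p.length) : q.edgeProd σ = 1 :=
    ih _ (hn ▸ hq) q rfl
  rcases lt_or_ge p.length 4 with h4 | h4
  · exact edgeProd_eq_one_of_length_lt_four hσ p h4
  by_cases hinj : Set.InjOn p.getVert (Set.Iio p.length)
  · obtain ⟨a, c, hc, hac, hc', hadj⟩ :=
      hG.exists_chord h4 hinj (fun k hk => p.adj_getVert_succ hk) (by simp)
    exact edgeProd_eq_one_of_adj hσ.inv ih' hc hac hc' hadj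
  · simp only [Set.InjOn, Set.mem_Iio, not_forall] at hinj
    obtain ⟨a, ha, b, hb, heq, hab⟩ := hinj
    rcases Ne.lt_or_gt hab with h | h
    · exact edgeProd_eq_one_of_getVert_eq ih' (a := a) (c := b - a) (by omega) (by omega)
        (by rw [Nat.add_sub_cancel' h.le, heq])
    · exact edgeProd_eq_one_of_getVert_eq ih' (a := b) (c := a - b) (by omega) (by omega)
        (by rw [Nat.add_sub_cancel' h.le, heq])

theorem edgeProd_eq (hG : IsChordal G) (hσ : G.IsCocycle σ) {u v : V} (p q : G.Walk u v) :
    p.edgeProd σ = q.edgeProd σ := by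
  have h := hG.edgeProd_eq_one hσ (p.append q.reverse)
  rwa [edgeProd_append, edgeProd_reverse σ hσ.inv, mul_inv_eq_one] at h

theorem exists_potential (hG : IsChordal G) (hσ : G.IsCocycle σ) :
    ∃ ε : V → α, ∀ u v, G.Adj u v → ε v = ε u * σ u v := by
  choose rep hrep using fun C : G.ConnectedComponent => C.exists_rep
  obtain ⟨w⟩ : Nonempty (∀ u, G.Walk (rep (G.connectedComponentMk u)) u) :=
    ⟨fun u => (ConnectedComponent.exact (hrep _)).some⟩
  refine ⟨fun u => (w u).edgeProd σ, fun u v huv => ?_⟩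
  have hr : rep (G.connectedComponentMk u) = rep (G.connectedComponentMk v) := by
    rw [ConnectedComponent.connectedComponentMk_eq_of_adj huv]
  show (w v).edgeProd σ = (w u).edgeProd σ * σ u v
  rw [← edgeProd_concat, hG.edgeProd_eq hσ (w v) (((w u).concat huv).copy hr rfl),
    edgeProd_copy]

theorem exists_signs (hG : IsChordal G) {Z : Matrix V V ℝ}
    (hsymm : ∀ i j, G.Adj i j → Z j i = Z i j) (hdiag : ∀ i, 0 ≤ Z i i)
    (hedge : ∀ i j, G.Adj i j → Z i i * Z j j = Z i j * Z j i)
    (htri : ∀ i j k, G.Adj i j → G.Adj j k → G.Adj i k → Z i j * Z j k = Z i k * Z j j) :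
    ∃ ε : V → ℤˣ, ∀ i j, G.Adj i j → Z i i ≠ 0 → Z j j ≠ 0 →
      Z i j = ((ε i * ε j : ℤˣ) : ℤ) * (√(Z i i) * √(Z j j)) := by
  set s : Set V := {i | Z i i ≠ 0}
  have hsqrt (i : s) : √(Z i i) ≠ 0 :=
    Real.sqrt_ne_zero'.mpr ((hdiag i).lt_of_ne (Ne.symm i.2))
  have hsign (u v : s) :
      ∃ e : ℤˣ, (G.induce s).Adj u v → Z u v = (e : ℤ) * (√(Z u u) * √(Z v v)) := by
    by_cases huv : (G.induce s).Adj u v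
    · refine (Int.exists_unit_mul_eq_of_mul_self_eq ?_).imp fun e he _ => he
      rw [mul_mul_mul_comm, Real.mul_self_sqrt (hdiag u), Real.mul_self_sqrt (hdiag v),
        hedge u v huv, hsymm u v huv]
    · exact ⟨1, fun h => (huv h).elim⟩
  choose σ hσ using hsign
  have hinv (u v : s) (huv : (G.induce s).Adj u v) : σ v u = (σ u v)⁻¹ := by
    rw [Int.units_inv_eq_self]
    refine Int.unit_eq_of_cast_mul_eq (mul_ne_zero (hsqrt u) (hsqrt v)) ?_
    rw [← hσ u v huv, mul_comm √(Z u u), ← hσ v u huv.symm, hsymm u v huv]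
  have hmul (u v w : s) (huv : (G.induce s).Adj u v) (hvw : (G.induce s).Adj v w)
      (huw : (G.induce s).Adj u w) : σ u v * σ v w = σ u w := by
    refine Int.unit_eq_of_cast_mul_eq (c := √(Z u u) * √(Z w w) * (√(Z v v) * √(Z v v)))
      (by simp [hsqrt]) ?_
    calc _ = ((σ u v : ℤ) * (√(Z u u) * √(Z v v))) * ((σ v w : ℤ) * (√(Z v v) * √(Z w w))) := by
          push_cast; ring
      _ = ((σ u w : ℤ) * (√(Z u u) * √(Z w w))) * Z v v := by
          rw [← hσ u v huv, ← hσ v w hvw, ← hσ u w huw, htri u v w huv hvw huw]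
      _ = _ := by rw [Real.mul_self_sqrt (hdiag v), mul_assoc]
  obtain ⟨ε, hε⟩ := (hG.comap (Function.Embedding.subtype _)).exists_potential ⟨hinv, hmul⟩
  refine ⟨fun i => if h : Z i i ≠ 0 then ε ⟨i, h⟩ else 1, fun i j hij hi hj => ?_⟩
  simp only [dif_pos hi, dif_pos hj]
  rw [hε ⟨i, hi⟩ ⟨j, hj⟩ hij, ← mul_assoc (ε ⟨i, hi⟩), Int.units_mul_self, one_mul]
  exact hσ ⟨i, hi⟩ ⟨j, hj⟩ hij

theorem exists_mul_self_completion [Fintype V] (hG : IsChordal G) {Z : Matrix V V ℝ}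
    (hblock : ∀ s : Finset V, G.IsClique (s : Set V) →
      (Z.submatrix (fun i : s => (i : V)) (fun j : s => (j : V))).PosSemidef ∧
      (Z.submatrix (fun i : s => (i : V)) (fun j : s => (j : V))).rank ≤ 1) :
    ∃ x : V → ℝ, (∀ i, x i * x i = Z i i) ∧ ∀ i j, G.Adj i j → x i * x j = Z i j := by
  classical
  have hpair {i j : V} (h : G.Adj i j) : G.IsClique (({i, j} : Finset V) : Set V) := by
    simpa using G.isClique_pair.mpr fun _ => h
  have hdiag (i : V) : 0 ≤ Z i i :=
    (hblock {i} (by simp)).1.diag_nonneg (i := ⟨i, Finset.mem_singleton_self i⟩)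
  have hsymm (i j : V) (h : G.Adj i j) : Z j i = Z i j := by
    simpa using (hblock _ (hpair h)).1.1.apply ⟨i, by simp⟩ ⟨j, by simp⟩
  have hedge (i j : V) (h : G.Adj i j) : Z i i * Z j j = Z i j * Z j i :=
    Matrix.mul_apply_eq_of_rank_le_one (hblock _ (hpair h)).2
      ⟨i, by simp⟩ ⟨j, by simp⟩ ⟨i, by simp⟩ ⟨j, by simp⟩
  have htri (i j k : V) (hij : G.Adj i j) (hjk : G.Adj j k) (hik : G.Adj i k) :
      Z i j * Z j k = Z i k * Z j j :=
    Matrix.mul_apply_eq_of_rank_le_one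
      (hblock {i, j, k} (G.is3Clique_triple_iff.mpr ⟨hij, hik, hjk⟩).isClique).2
      ⟨i, by simp⟩ ⟨j, by simp⟩ ⟨j, by simp⟩ ⟨k, by simp⟩
  obtain ⟨ε, hε⟩ := hG.exists_signs hsymm hdiag hedge htri
  refine ⟨fun i => (ε i : ℤ) * √(Z i i), fun i => ?_, fun i j hij => ?_⟩
  · calc _ = (((ε i * ε i : ℤˣ) : ℤ) : ℝ) * (√(Z i i) * √(Z i i)) := by push_cast; ring
      _ = Z i i := by rw [Int.units_mul_self, Real.mul_self_sqrt (hdiag i)]; simp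
  by_cases h : Z i i = 0 ∨ Z j j = 0
  · have hsq : Z i j * Z i j = Z i i * Z j j := by rw [hedge i j hij, hsymm i j hij]
    rcases h with h | h <;> simp [h] at hsq ⊢ <;> simp [hsq]
  · rw [not_or] at h
    rw [hε i j hij h.1 h.2]
    push_cast
    ring

end IsChordal

theorem exists_isMaxClq_superset {V : Type*} [Finite V] (G : SimpleGraph V) {s : Finset V}
    (hs : G.IsClique (s : Set V)) : ∃ t : Finset V, s ⊆ t ∧ IsMaxClq G t := by
  obtain ⟨t, hst, ht⟩ :=
    Finite.exists_le_maximal (p := fun t : Finset V => G.IsClique (t : Set V)) hs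
  refine ⟨t, hst, ht.prop, fun u hu htu => ?_⟩
  lift u to Finset V using u.toFinite
  exact Finset.coe_inj.mpr (le_antisymm htu (ht.le_of_ge hu htu))

theorem submatrix_posSemidef_and_rank_le_one_of_isClique {V : Type*} [Fintype V]
    {G : SimpleGraph V} {Z : Matrix V V ℝ}
    (hR : ∀ s : Finset V, IsMaxClq G (↑s : Set V) →
      (Z.submatrix (fun i : s => (i : V)) (fun j : s => (j : V))).PosSemidef ∧
      (Z.submatrix (fun i : s => (i : V)) (fun j : s => (j : V))).rank ≤ 1)
    {s : Finset V} (hs : G.IsClique (s : Set V)) :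
    (Z.submatrix (fun i : s => (i : V)) (fun j : s => (j : V))).PosSemidef ∧
      (Z.submatrix (fun i : s => (i : V)) (fun j : s => (j : V))).rank ≤ 1 := by
  obtain ⟨t, hst, ht⟩ := exists_isMaxClq_superset G hs
  obtain ⟨hpsd, hrank⟩ := hR t ht
  let ι : s → t := fun i => ⟨i, hst i.2⟩
  have hsub : Z.submatrix (fun i : s => (i : V)) (fun j : s => (j : V)) =
      (Z.submatrix (fun i : t => (i : V)) (fun j : t => (j : V))).submatrix ι ι := rfl
  rw [hsub]
  exact ⟨hpsd.submatrix ι, (Matrix.rank_submatrix_le _ ι ι).trans hrank⟩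

theorem stmt2_general {V : Type} [Fintype V]
    (G : SimpleGraph V) (hG : IsChordal G)
    (Z' : Matrix V V ℝ) :
    (∃ Z : Matrix V V ℝ, Z.PosSemidef ∧ Z.rank ≤ 1 ∧
        (∀ i, Z i i = Z' i i) ∧ (∀ i j, G.Adj i j → Z i j = Z' i j)) ↔
      (∀ s : Finset V, IsMaxClq G (↑s : Set V) →
        (Z'.submatrix (fun i : s => (i : V)) (fun j : s => (j : V))).PosSemidef ∧
        (Z'.submatrix (fun i : s => (i : V)) (fun j : s => (j : V))).rank ≤ 1) := by
  constructor
  · rintro ⟨Z, hpsd, hrank, hdiag, hedge⟩ s hs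
    have hblock : Z'.submatrix (fun i : s => (i : V)) (fun j : s => (j : V)) =
        Z.submatrix (fun i : s => (i : V)) (fun j : s => (j : V)) := by
      ext i j
      by_cases hij : (i : V) = j
      · simp [hij, hdiag]
      · exact (hedge _ _ (hs.1 i.2 j.2 hij)).symm
    rw [hblock]
    exact ⟨hpsd.submatrix _, (Matrix.rank_submatrix_le _ _ _).trans hrank⟩
  · intro hR
    obtain ⟨x, hxx, hx⟩ := hG.exists_mul_self_completion fun s =>
      submatrix_posSemidef_and_rank_le_one_of_isClique hR
    refine ⟨Matrix.vecMulVec x x, ?_, Matrix.rank_vecMulVec_le x x, hxx, hx⟩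
    simpa using Matrix.posSemidef_vecMulVec_self_star x

/-- rank-1 PSD completion on a chordal pattern.  The partially specified
symmetric matrix `Z'` (specified on the diagonal and on edges of the chordal graph `G`)
admits a positive semidefinite completion of rank at most 1 iff every principal submatrix
indexed by a maximal clique of `G` is positive semidefinite of rank at most 1. -/
theorem stmt2 {V : Type} [Fintype V] [DecidableEq V]
    (G : SimpleGraph V) (hG : IsChordal G)
    (Z' : Matrix V V ℝ) (hsymm : Z'.IsSymm) :
    (∃ Z : Matrix V V ℝ, Z.PosSemidef ∧ Z.rank ≤ 1 ∧
        (∀ i, Z i i = Z' i i) ∧ (∀ i j, G.Adj i j → Z i j = Z' i j)) ↔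
      (∀ s : Finset V, IsMaxClq G (↑s : Set V) →
        (Z'.submatrix (fun i : s => (i : V)) (fun j : s => (j : V))).PosSemidef ∧
        (Z'.submatrix (fun i : s => (i : V)) (fun j : s => (j : V))).rank ≤ 1) :=
  stmt2_general G hG Z'
end
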